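/- arXiv:2504.07629 — 6 statements merged into one kernel-verified Lean document; each statement's English description precedes it below -/
import Mathlib

section
/- Let u : ℝ³ → ℝ³ be twice continuously differentiable, B : ℝ³ → ℝ³ continuously differentiable, and α, β : ℝ³ → ℝ continuously differentiable. If B + curl u = α u and u − curl B = −β B pointwise on ℝ³, then u satisfies the double curl equation curl (curl u) − (α + β) · curl u + (1 + α β) · u = (∇α) × u pointwise on ℝ³. -/
noncomputable section

open Real MeasureTheory

/-- ℝ³ as coordinate functions. -/
abbrev V3 : Type := Fin 3 → ℝ

/-- Partial derivative in the `i`-th coordinate direction. -/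
noncomputable def pd (i : Fin 3) (f : V3 → ℝ) (x : V3) : ℝ :=
  fderiv ℝ f x (Pi.single i 1)

/-- Curl of a vector field on ℝ³:
`curl v = (∂₂v₃ − ∂₃v₂, ∂₃v₁ − ∂₁v₃, ∂₁v₂ − ∂₂v₁)`. -/
noncomputable def curl (v : V3 → V3) (x : V3) : V3 :=
  ![pd 1 (fun y => v y 2) x - pd 2 (fun y => v y 1) x,
    pd 2 (fun y => v y 0) x - pd 0 (fun y => v y 2) x,
    pd 0 (fun y => v y 1) x - pd 1 (fun y => v y 0) x]

/-- Divergence of a vector field on ℝ³. -/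
noncomputable def div3 (v : V3 → V3) (x : V3) : ℝ :=
  pd 0 (fun y => v y 0) x + pd 1 (fun y => v y 1) x + pd 2 (fun y => v y 2) x

/-- Gradient of a scalar function on ℝ³. -/
noncomputable def grad (f : V3 → ℝ) (x : V3) : V3 :=
  ![pd 0 f x, pd 1 f x, pd 2 f x]

/-- Cross product on ℝ³. -/
def cross (a b : V3) : V3 :=
  ![a 1 * b 2 - a 2 * b 1, a 2 * b 0 - a 0 * b 2, a 0 * b 1 - a 1 * b 0]

/-- Componentwise Laplacian of a vector field. -/
noncomputable def lap (v : V3 → V3) (x : V3) : V3 :=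
  fun j => ∑ i : Fin 3, pd i (fun y => pd i (fun z => v z j) y) x

/-- Advection term `((u·∇)w)_j = Σ_i u_i ∂_i w_j`. -/
noncomputable def adv (u w : V3 → V3) (x : V3) : V3 :=
  fun j => ∑ i : Fin 3, u x i * pd i (fun y => w y j) x

/-- Time derivative of a time-dependent vector field. -/
noncomputable def dt (u : ℝ → V3 → V3) (t : ℝ) (x : V3) : V3 :=
  fun j => deriv (fun s => u s x j) t

lemma pd_sub {f g : V3 → ℝ} {x : V3} (i : Fin 3)
    (hf : DifferentiableAt ℝ f x) (hg : DifferentiableAt ℝ g x) :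
    pd i (fun y => f y - g y) x = pd i f x - pd i g x := by
  unfold pd; rw [fderiv_fun_sub hf hg]; simp

lemma pd_mul {f g : V3 → ℝ} {x : V3} (i : Fin 3)
    (hf : DifferentiableAt ℝ f x) (hg : DifferentiableAt ℝ g x) :
    pd i (fun y => f y * g y) x = pd i f x * g x + f x * pd i g x := by
  unfold pd; rw [fderiv_fun_mul hf hg]; simp; ring

/-- a double Beltrami state's velocity satisfies the double curl equation. -/
theorem double_curl_equation_for_u
    (u B : V3 → V3) (α β : V3 → ℝ)
    (hu : ContDiff ℝ 2 u) (hB : ContDiff ℝ 1 B)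
    (hα : ContDiff ℝ 1 α) (hβ : ContDiff ℝ 1 β)
    (h1 : ∀ x, B x + curl u x = α x • u x)
    (h2 : ∀ x, u x - curl B x = -(β x) • B x) :
    ∀ x, curl (fun y => curl u y) x - (α x + β x) • curl u x + (1 + α x * β x) • u x
      = cross (grad α x) (u x) := by
  intro x
  have hud : ∀ (j : Fin 3) (y : V3), DifferentiableAt ℝ (fun z => u z j) y :=
    fun j y => ((contDiff_pi.1 hu j).differentiable (by norm_num)) y
  have hαd : ∀ y, DifferentiableAt ℝ α y := fun y => (hα.differentiable one_ne_zero) y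
  have hpdd : ∀ (i j : Fin 3) (y : V3),
      DifferentiableAt ℝ (fun z => pd i (fun w => u w j) z) y := by
    intro i j y
    have : ContDiff ℝ 1 (fun z => pd i (fun w => u w j) z) :=
      ((contDiff_pi.1 hu j).fderiv_right (by norm_num)).clm_apply contDiff_const
    exact (this.differentiable one_ne_zero) y
  have hcud : ∀ (k : Fin 3) (y : V3), DifferentiableAt ℝ (fun z => curl u z k) y := by
    intro k y
    fin_cases k <;>
      simp only [curl, Matrix.cons_val_zero, Matrix.cons_val_one, Matrix.head_cons,
        Matrix.cons_val_two, Matrix.tail_cons, Fin.isValue] <;>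
      exact (hpdd _ _ y).sub (hpdd _ _ y)
  have hB' : B = fun y => α y • u y - curl u y := by
    funext y
    have := h1 y
    rw [← this]; abel
  have comp : ∀ (i k : Fin 3), pd i (fun y => α y * u y k - curl u y k) x
      = pd i α x * u x k + α x * pd i (fun y => u y k) x
        - pd i (fun y => curl u y k) x := by
    intro i k
    rw [pd_sub (f := fun y => α y * u y k) i ((hαd x).mul (hud k x)) (hcud k x), pd_mul i (hαd x) (hud k x)]
  have h2' := h2 x
  rw [hB'] at h2'
  have hE : ∀ j : Fin 3, u x j - curl (fun y => α y • u y - curl u y) x j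
      = -(β x) * (α x * u x j - curl u x j) := by
    intro j
    have := congrFun h2' j
    simpa [hB', Pi.sub_apply, Pi.smul_apply, smul_eq_mul] using this
  have hW : (fun y => α y • u y - curl u y) = fun y k => α y * u y k - curl u y k := by
    funext y k; simp
  rw [hW] at hE
  have hm2 : ∀ (h : 2 < 3), (⟨2, h⟩ : Fin 3) = 2 := fun _ => rfl
  funext j
  fin_cases j
  · have E := hE 0
    have c1 := comp 1 2
    have c2 := comp 2 1
    simp only [curl, cross, grad, Pi.sub_apply, Pi.add_apply, Pi.smul_apply, smul_eq_mul,
      Fin.mk_zero, Fin.mk_one, hm2,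
      Matrix.cons_val_zero, Matrix.cons_val_one, Matrix.head_cons, Matrix.cons_val_two,
      Matrix.tail_cons, Fin.isValue] at E c1 c2 ⊢
    linear_combination E + c1 - c2
  · have E := hE 1
    have c1 := comp 2 0
    have c2 := comp 0 2
    simp only [curl, cross, grad, Pi.sub_apply, Pi.add_apply, Pi.smul_apply, smul_eq_mul,
      Fin.mk_zero, Fin.mk_one, hm2,
      Matrix.cons_val_zero, Matrix.cons_val_one, Matrix.head_cons, Matrix.cons_val_two,
      Matrix.tail_cons, Fin.isValue] at E c1 c2 ⊢
    linear_combination E + c1 - c2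
  · have E := hE 2
    have c1 := comp 0 1
    have c2 := comp 1 0
    simp only [curl, cross, grad, Pi.sub_apply, Pi.add_apply, Pi.smul_apply, smul_eq_mul,
      Fin.mk_zero, Fin.mk_one, hm2,
      Matrix.cons_val_zero, Matrix.cons_val_one, Matrix.head_cons, Matrix.cons_val_two,
      Matrix.tail_cons, Fin.isValue] at E c1 c2 ⊢
    linear_combination E + c1 - c2
end
end

section
/- Let u : ℝ³ → ℝ³ be twice continuously differentiable, B : ℝ³ → ℝ³ continuously differentiable, and α, β, λ : ℝ³ → ℝ continuously differentiable. Suppose curl u = λ u, B + curl u = α u, and u − curl B = −β B pointwise on ℝ³. Then for every x ∈ ℝ³ one has (λ(x)² − (α(x)+β(x)) λ(x) + 1 + α(x) β(x)) · u(x) = ∇(α − λ)(x) × u(x); consequently, at every point x with u(x) ≠ 0, the characteristic equation λ(x)² − (α(x)+β(x)) λ(x) + (1 + α(x) β(x)) = 0 holds, and ∇(α − λ)(x) × u(x) = 0 holds at every x ∈ ℝ³. -/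
noncomputable section

open Real MeasureTheory

/-- if a Beltrami flow `curl u = λ u` is part of a double Beltrami state,
then the characteristic equation holds wherever `u ≠ 0`, and `∇(α−λ) × u = 0` everywhere. -/
theorem beltrami_characteristic_equation
    (u B : V3 → V3) (α β lam : V3 → ℝ)
    (hu : ContDiff ℝ 2 u) (hB : ContDiff ℝ 1 B)
    (hα : ContDiff ℝ 1 α) (hβ : ContDiff ℝ 1 β) (hlam : ContDiff ℝ 1 lam)
    (hbel : ∀ x, curl u x = lam x • u x)
    (h1 : ∀ x, B x + curl u x = α x • u x)
    (h2 : ∀ x, u x - curl B x = -(β x) • B x) :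
    (∀ x, (lam x ^ 2 - (α x + β x) * lam x + 1 + α x * β x) • u x
        = cross (grad (fun y => α y - lam y) x) (u x)) ∧
    (∀ x, u x ≠ 0 → lam x ^ 2 - (α x + β x) * lam x + (1 + α x * β x) = 0) ∧
    (∀ x, cross (grad (fun y => α y - lam y) x) (u x) = 0) := by

  have hfd : Differentiable ℝ (fun y => α y - lam y) :=
    (hα.differentiable (by norm_num)).sub (hlam.differentiable (by norm_num))
  have hud : ∀ j : Fin 3, Differentiable ℝ (fun y => u y j) := fun j =>
    (differentiable_pi.mp (hu.differentiable (by norm_num))) j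
  have pdmul : ∀ (i j : Fin 3) (x : V3),
      pd i (fun y => (α y - lam y) * u y j) x
        = pd i (fun y => α y - lam y) x * u x j
          + (α x - lam x) * pd i (fun y => u y j) x := by
    intro i j x
    unfold pd
    rw [fderiv_fun_mul (hfd x) (hud j x)]
    simp [mul_comm]
    ring
  have hBf : B = fun y => (α y - lam y) • u y := by
    funext y
    have h := h1 y
    rw [hbel y] at h
    have : B y = α y • u y - lam y • u y := by rw [← h]; abel
    rw [this, ← sub_smul]
  -- Beltrami component equations
  have b0 : ∀ x, pd 1 (fun y => u y 2) x - pd 2 (fun y => u y 1) x = lam x * u x 0 := by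
    intro x; have := congrFun (hbel x) 0; simpa [curl] using this
  have b1 : ∀ x, pd 2 (fun y => u y 0) x - pd 0 (fun y => u y 2) x = lam x * u x 1 := by
    intro x; have := congrFun (hbel x) 1; simpa [curl] using this
  have b2 : ∀ x, pd 0 (fun y => u y 1) x - pd 1 (fun y => u y 0) x = lam x * u x 2 := by
    intro x; have := congrFun (hbel x) 2; simpa [curl] using this
  -- rewrite h2 with B = (α−λ)•u
  rw [hBf] at h2
  have e : ∀ (x : V3) (j : Fin 3),
      u x j - curl (fun y => (α y - lam y) • u y) x j = -(β x) * ((α x - lam x) * u x j) := by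
    intro x j
    have := congrFun (h2 x) j
    simpa [Pi.smul_apply, smul_eq_mul, mul_assoc] using this
  have e0 : ∀ x, u x 0 - (pd 1 (fun y => (α y - lam y) * u y 2) x
      - pd 2 (fun y => (α y - lam y) * u y 1) x) = -(β x) * ((α x - lam x) * u x 0) := by
    intro x; have := e x 0; simpa [curl, Pi.smul_apply, smul_eq_mul] using this
  have e1 : ∀ x, u x 1 - (pd 2 (fun y => (α y - lam y) * u y 0) x
      - pd 0 (fun y => (α y - lam y) * u y 2) x) = -(β x) * ((α x - lam x) * u x 1) := by
    intro x; have := e x 1; simpa [curl, Pi.smul_apply, smul_eq_mul] using this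
  have e2 : ∀ x, u x 2 - (pd 0 (fun y => (α y - lam y) * u y 1) x
      - pd 1 (fun y => (α y - lam y) * u y 0) x) = -(β x) * ((α x - lam x) * u x 2) := by
    intro x; have := e x 2; simpa [curl, Pi.smul_apply, smul_eq_mul] using this
  -- key componentwise identity
  have key : ∀ (x : V3) (j : Fin 3),
      (lam x ^ 2 - (α x + β x) * lam x + 1 + α x * β x) * u x j
        = cross (grad (fun y => α y - lam y) x) (u x) j := by
    intro x j
    have E0 := e0 x; have E1 := e1 x; have E2 := e2 x
    rw [pdmul 1 2 x, pdmul 2 1 x] at E0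
    rw [pdmul 2 0 x, pdmul 0 2 x] at E1
    rw [pdmul 0 1 x, pdmul 1 0 x] at E2
    fin_cases j
    · show (lam x ^ 2 - (α x + β x) * lam x + 1 + α x * β x) * u x 0
          = cross (grad (fun y => α y - lam y) x) (u x) 0
      simp only [cross, grad, Matrix.cons_val_zero, Matrix.cons_val_one, Matrix.head_cons,
        Matrix.cons_val_two, Matrix.tail_cons]
      linear_combination E0 + (α x - lam x) * b0 x
    · show (lam x ^ 2 - (α x + β x) * lam x + 1 + α x * β x) * u x 1
          = cross (grad (fun y => α y - lam y) x) (u x) 1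
      simp only [cross, grad, Matrix.cons_val_zero, Matrix.cons_val_one, Matrix.head_cons,
        Matrix.cons_val_two, Matrix.tail_cons]
      linear_combination E1 + (α x - lam x) * b1 x
    · show (lam x ^ 2 - (α x + β x) * lam x + 1 + α x * β x) * u x 2
          = cross (grad (fun y => α y - lam y) x) (u x) 2
      simp only [cross, grad, Matrix.cons_val_zero, Matrix.cons_val_one, Matrix.head_cons,
        Matrix.cons_val_two, Matrix.tail_cons]
      linear_combination E2 + (α x - lam x) * b2 x
  have key' : ∀ x, (lam x ^ 2 - (α x + β x) * lam x + 1 + α x * β x) • u x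
      = cross (grad (fun y => α y - lam y) x) (u x) := by
    intro x; funext j
    simpa [Pi.smul_apply, smul_eq_mul] using key x j
  have char : ∀ x, u x ≠ 0 → lam x ^ 2 - (α x + β x) * lam x + (1 + α x * β x) = 0 := by
    intro x hx
    have hS : u x 0 ^ 2 + u x 1 ^ 2 + u x 2 ^ 2 ≠ 0 := by
      intro h0
      apply hx
      funext j
      fin_cases j
      · show u x 0 = 0
        nlinarith [sq_nonneg (u x 0), sq_nonneg (u x 1), sq_nonneg (u x 2)]
      · show u x 1 = 0
        nlinarith [sq_nonneg (u x 0), sq_nonneg (u x 1), sq_nonneg (u x 2)]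
      · show u x 2 = 0
        nlinarith [sq_nonneg (u x 0), sq_nonneg (u x 1), sq_nonneg (u x 2)]
    have K0 := key x 0; have K1 := key x 1; have K2 := key x 2
    simp only [cross, grad, Matrix.cons_val_zero, Matrix.cons_val_one, Matrix.head_cons,
      Matrix.cons_val_two, Matrix.tail_cons, Fin.isValue] at K0 K1 K2
    have hprod : (lam x ^ 2 - (α x + β x) * lam x + (1 + α x * β x))
        * (u x 0 ^ 2 + u x 1 ^ 2 + u x 2 ^ 2) = 0 := by
      linear_combination u x 0 * K0 + u x 1 * K1 + u x 2 * K2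
    exact (mul_eq_zero.mp hprod).resolve_right hS
  refine ⟨key', char, ?_⟩
  intro x
  by_cases hx : u x = 0
  · rw [← key' x, hx, smul_zero]
  · have hz : lam x ^ 2 - (α x + β x) * lam x + 1 + α x * β x = 0 := by
      have := char x hx; linarith
    rw [← key' x, hz, zero_smul]
end
end

section
/- Let u : ℝ³ → ℝ³ be twice continuously differentiable and α, β : ℝ³ → ℝ continuously differentiable, all three functions 2π-periodic in each coordinate. If curl(curl u) − (α + β) · curl u + (1 + α β) · u = (∇α) × u pointwise on ℝ³, then ∫_{[−π,π]³} ((α(x) − β(x))² − 4) |u(x)|² dx ≥ 0. In particular, if α − β is equal to a constant c and u is not identically zero, then c² ≥ 4, i.e. |α − β| ≥ 2. -/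
noncomputable section

open Real MeasureTheory

namespace Helpers

theorem pd_sub {f g : V3 → ℝ} {x : V3} (hf : DifferentiableAt ℝ f x)
    (hg : DifferentiableAt ℝ g x) (i : Fin 3) :
    pd i (fun y => f y - g y) x = pd i f x - pd i g x := by
  unfold pd; rw [fderiv_fun_sub hf hg]; rfl

theorem pd_mul {f g : V3 → ℝ} {x : V3} (hf : DifferentiableAt ℝ f x)
    (hg : DifferentiableAt ℝ g x) (i : Fin 3) :
    pd i (fun y => f y * g y) x = pd i f x * g x + f x * pd i g x := by
  unfold pd; rw [fderiv_fun_mul hf hg]; simp; ring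

theorem contDiff_pd {f : V3 → ℝ} (hf : ContDiff ℝ 2 f) (i : Fin 3) :
    ContDiff ℝ 1 (pd i f) :=
  (hf.fderiv_right (le_refl _)).clm_apply contDiff_const

theorem continuous_pd {f : V3 → ℝ} (hf : ContDiff ℝ 1 f) (i : Fin 3) :
    Continuous (pd i f) :=
  (hf.continuous_fderiv one_ne_zero).clm_apply continuous_const

theorem pd_periodic {f : V3 → ℝ} (hf : Differentiable ℝ f)
    (hper : ∀ (x : V3) (i : Fin 3), f (x + Pi.single i (2 * π)) = f x)
    (x : V3) (i j : Fin 3) : pd j f (x + Pi.single i (2 * π)) = pd j f x := by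
  set v : V3 := Pi.single i (2 * π) with hv
  have h1 : (fun y => f (y + v)) = f := funext fun y => hper y i
  have h2 : HasFDerivAt (fun y => f (y + v)) (fderiv ℝ f (x + v)) x := by
    have := ((hf (x + v)).hasFDerivAt).comp x ((hasFDerivAt_id x).add_const v)
    simp at this; exact this
  have : fderiv ℝ f (x + v) = fderiv ℝ f x := by
    rw [← h2.fderiv]; exact congrArg (fun F => fderiv ℝ F x) h1
  unfold pd; rw [this]

theorem insertNth_shift (i : Fin 3) (y : Fin 2 → ℝ) :
    (Fin.insertNth i (-π) y + Pi.single i (2 * π) : V3) = Fin.insertNth i π y := by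
  funext j
  rcases eq_or_ne j i with rfl | hj
  · simp [Fin.insertNth_apply_same]; ring
  · rcases Fin.exists_succAbove_eq hj with ⟨k, rfl⟩
    simp [Fin.insertNth_apply_succAbove, Pi.single_eq_of_ne (Fin.succAbove_ne i k)]

theorem integral_pd_eq_zero (F : V3 → ℝ) (hF : ContDiff ℝ 1 F)
    (hper : ∀ (x : V3) (i : Fin 3), F (x + Pi.single i (2 * π)) = F x) (i₀ : Fin 3) :
    ∫ x in Set.Icc (fun _ : Fin 3 => -π) (fun _ => π), pd i₀ F x = 0 := by
  classical
  have hle : (fun _ : Fin 3 => -π) ≤ (fun _ : Fin 3 => π) := fun _ => by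
    simp; positivity
  have key := MeasureTheory.integral_divergence_of_hasFDerivAt_off_countable'
      (a := fun _ : Fin 3 => -π) (b := fun _ : Fin 3 => π) hle
      (fun i x => if i = i₀ then F x else 0)
      (fun i x => if i = i₀ then fderiv ℝ F x else 0)
      ∅ Set.countable_empty
      (fun i => by
        by_cases h : i = i₀ <;> simp [h]
        exacts [hF.continuous.continuousOn, continuousOn_const])
      (fun x _ i => by
        by_cases h : i = i₀ <;> simp [h]
        · exact (hF.differentiable one_ne_zero x).hasFDerivAt
        · exact hasFDerivAt_const 0 x)
      (by
        have : (fun x => ∑ i : Fin 3, (if i = i₀ then fderiv ℝ F x else 0) (Pi.single i 1))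
            = fun x => fderiv ℝ F x (Pi.single i₀ 1) := by
          funext x
          rw [Finset.sum_eq_single i₀ (fun b _ hb => by simp [hb]) (by simp)]
          simp
        rw [this]
        exact (((hF.continuous_fderiv one_ne_zero).clm_apply continuous_const).continuousOn).integrableOn_compact isCompact_Icc)
  have hdiv : (fun x => ∑ i : Fin 3, (if i = i₀ then fderiv ℝ F x else 0) (Pi.single i 1))
      = fun x => pd i₀ F x := by
    funext x; rw [Finset.sum_eq_single i₀ (fun b _ hb => by simp [hb]) (by simp)]; simp [pd]
  rw [hdiv] at key
  rw [key]
  apply Finset.sum_eq_zero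
  intro i _
  by_cases h : i = i₀
  · subst h
    rw [sub_eq_zero]
    apply setIntegral_congr_fun measurableSet_Icc
    intro y _
    show (if i = i then F (i.insertNth π y) else 0) = (if i = i then F (i.insertNth (-π) y) else 0)
    rw [if_pos rfl, if_pos rfl, ← insertNth_shift i y, hper]
  · simp [h]

/-- div (v × u) = u ⬝ curl v − v ⬝ curl u -/
theorem div_cross (v u : V3 → V3) (x : V3)
    (hv : ∀ j, DifferentiableAt ℝ (fun y => v y j) x)
    (hu : ∀ j, DifferentiableAt ℝ (fun y => u y j) x) :
    pd 0 (fun y => v y 1 * u y 2 - v y 2 * u y 1) x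
      + pd 1 (fun y => v y 2 * u y 0 - v y 0 * u y 2) x
      + pd 2 (fun y => v y 0 * u y 1 - v y 1 * u y 0) x
      = (∑ j, u x j * curl v x j) - ∑ j, v x j * curl u x j := by
  simp (disch := apply_rules [DifferentiableAt.mul, hv, hu]) only [pd_sub, pd_mul]
  simp [curl, Fin.sum_univ_three]
  ring

/-- The auxiliary field `w = curl u - α u`. -/
noncomputable def W (u : V3 → V3) (α : V3 → ℝ) : V3 → V3 := fun x => curl u x - α x • u x

theorem curl_W_eq (u : V3 → V3) (α β : V3 → ℝ) (hu : ContDiff ℝ 2 u) (hα : ContDiff ℝ 1 α)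
    (hdc : ∀ x, curl (fun y => curl u y) x - (α x + β x) • curl u x + (1 + α x * β x) • u x
        = cross (grad α x) (u x)) :
    ∀ (x : V3) (j : Fin 3), curl (W u α) x j = β x * W u α x j - u x j := by
  intro x j
  have hud : ∀ k, ContDiff ℝ 2 (fun y => u y k) := fun k => contDiff_pi.mp hu k
  have hDu : ∀ (a b : Fin 3), DifferentiableAt ℝ (fun y => pd a (fun z => u z b) y) x :=
    fun a b => ((contDiff_pd (hud b) a).differentiable one_ne_zero).differentiableAt
  have hDα : DifferentiableAt ℝ α x := (hα.differentiable one_ne_zero).differentiableAt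
  have hDuk : ∀ k, DifferentiableAt ℝ (fun y => u y k) x :=
    fun k => ((hud k).differentiable two_ne_zero).differentiableAt
  have h := congrFun (hdc x) j
  fin_cases j <;>
  · simp only [curl, W, cross, grad, Pi.sub_apply, Pi.smul_apply, Pi.add_apply, smul_eq_mul,
      Matrix.cons_val_zero, Matrix.cons_val_one, Matrix.head_cons, Matrix.cons_val_two,
      Matrix.tail_cons, Fin.isValue, Fin.zero_eta, Fin.mk_one, Fin.reduceFinMk] at h ⊢
    simp (disch := apply_rules [DifferentiableAt.sub, DifferentiableAt.mul, hDu, hDα, hDuk]) only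
      [pd_sub, pd_mul] at h ⊢
    linear_combination h

theorem contDiff_W (u : V3 → V3) (α : V3 → ℝ) (hu : ContDiff ℝ 2 u) (hα : ContDiff ℝ 1 α) :
    ∀ j, ContDiff ℝ 1 (fun x => W u α x j) := by
  have hud : ∀ k, ContDiff ℝ 2 (fun y => u y k) := fun k => contDiff_pi.mp hu k
  intro j
  fin_cases j <;>
  · simp only [W, curl, Pi.sub_apply, Pi.smul_apply, smul_eq_mul, Matrix.cons_val_zero,
      Matrix.cons_val_one, Matrix.head_cons, Matrix.cons_val_two, Matrix.tail_cons,
      Fin.isValue, Fin.zero_eta, Fin.mk_one, Fin.reduceFinMk]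
    exact ((contDiff_pd (hud _) _).sub (contDiff_pd (hud _) _)).sub
      (hα.mul ((hud _).of_le one_le_two))

theorem W_periodic (u : V3 → V3) (α : V3 → ℝ) (hu : ContDiff ℝ 2 u)
    (huper : ∀ (x : V3) (i : Fin 3), u (x + Pi.single i (2 * π)) = u x)
    (hαper : ∀ (x : V3) (i : Fin 3), α (x + Pi.single i (2 * π)) = α x) :
    ∀ (x : V3) (i j : Fin 3), W u α (x + Pi.single i (2 * π)) j = W u α x j := by
  have hud : ∀ k, Differentiable ℝ (fun y => u y k) :=
    fun k => (contDiff_pi.mp hu k).differentiable two_ne_zero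
  have hup : ∀ (k : Fin 3) (x : V3) (i : Fin 3),
      (fun y => u y k) (x + Pi.single i (2 * π)) = (fun y => u y k) x :=
    fun k x i => congrFun (huper x i) k
  intro x i j
  fin_cases j <;>
  · simp only [W, curl, Pi.sub_apply, Pi.smul_apply, smul_eq_mul, Matrix.cons_val_zero,
      Matrix.cons_val_one, Matrix.head_cons, Matrix.cons_val_two, Matrix.tail_cons,
      Fin.isValue, Fin.zero_eta, Fin.mk_one, Fin.reduceFinMk]
    rw [pd_periodic (hud _) (hup _) x i, pd_periodic (hud _) (hup _) x i, hαper x i,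
      huper x i]

theorem integral_u_curl_symm (v u : V3 → V3)
    (hv : ∀ j, ContDiff ℝ 1 (fun x => v x j)) (hu : ∀ j, ContDiff ℝ 1 (fun x => u x j))
    (hvper : ∀ (x : V3) (i j : Fin 3), v (x + Pi.single i (2 * π)) j = v x j)
    (huper : ∀ (x : V3) (i j : Fin 3), u (x + Pi.single i (2 * π)) j = u x j) :
    ∫ x in Set.Icc (fun _ : Fin 3 => -π) (fun _ => π),
      ((∑ j, u x j * curl v x j) - ∑ j, v x j * curl u x j) = 0 := by
  have cd : ∀ (a b c d : Fin 3), ContDiff ℝ 1 (fun y => v y a * u y b - v y c * u y d) :=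
    fun a b c d => ((hv a).mul (hu b)).sub ((hv c).mul (hu d))
  have per : ∀ (a b c d : Fin 3) (x : V3) (i : Fin 3),
      (fun y => v y a * u y b - v y c * u y d) (x + Pi.single i (2 * π))
        = (fun y => v y a * u y b - v y c * u y d) x := by
    intro a b c d x i; simp only
    rw [hvper x i a, huper x i b, hvper x i c, huper x i d]
  have I : ∀ (a b c d i : Fin 3),
      IntegrableOn (fun x => pd i (fun y => v y a * u y b - v y c * u y d) x)
      (Set.Icc (fun _ : Fin 3 => -π) (fun _ => π)) :=
    fun a b c d i =>
      ((continuous_pd (cd a b c d) i).continuousOn).integrableOn_compact isCompact_Icc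
  have Z : ∀ (a b c d i : Fin 3),
      ∫ x in Set.Icc (fun _ : Fin 3 => -π) (fun _ => π),
        pd i (fun y => v y a * u y b - v y c * u y d) x = 0 :=
    fun a b c d i => integral_pd_eq_zero _ (cd a b c d) (per a b c d) i
  have step1 : ∫ x in Set.Icc (fun _ : Fin 3 => -π) (fun _ => π),
      ((∑ j, u x j * curl v x j) - ∑ j, v x j * curl u x j)
      = ∫ x in Set.Icc (fun _ : Fin 3 => -π) (fun _ => π),
        (pd 0 (fun y => v y 1 * u y 2 - v y 2 * u y 1) x
          + pd 1 (fun y => v y 2 * u y 0 - v y 0 * u y 2) x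
          + pd 2 (fun y => v y 0 * u y 1 - v y 1 * u y 0) x) :=
    setIntegral_congr_fun measurableSet_Icc (fun x _ =>
      (div_cross v u x
        (fun j => ((hv j).differentiable one_ne_zero).differentiableAt)
        (fun j => ((hu j).differentiable one_ne_zero).differentiableAt)).symm)
  have I01 : IntegrableOn (fun x => pd 0 (fun y => v y 1 * u y 2 - v y 2 * u y 1) x
      + pd 1 (fun y => v y 2 * u y 0 - v y 0 * u y 2) x)
      (Set.Icc (fun _ : Fin 3 => -π) (fun _ => π)) := (I 1 2 2 1 0).add (I 2 0 0 2 1)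
  rw [step1]
  simp only [MeasureTheory.integral_add I01 (I 0 1 1 0 2),
    MeasureTheory.integral_add (I 1 2 2 1 0) (I 2 0 0 2 1), Z]
  ring

end Helpers

open Helpers

/-- integrating the double curl equation over the periodic box gives
`∫ ((α−β)² − 4)|u|² ≥ 0`; hence if `α − β = c` is constant and `u ≢ 0` then `c² ≥ 4`. -/
theorem integral_inequality_alpha_beta
    (u : V3 → V3) (α β : V3 → ℝ)
    (hu : ContDiff ℝ 2 u) (hα : ContDiff ℝ 1 α) (hβ : ContDiff ℝ 1 β)
    (huper : ∀ (x : V3) (i : Fin 3), u (x + Pi.single i (2 * π)) = u x)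
    (hαper : ∀ (x : V3) (i : Fin 3), α (x + Pi.single i (2 * π)) = α x)
    (hβper : ∀ (x : V3) (i : Fin 3), β (x + Pi.single i (2 * π)) = β x)
    (hdc : ∀ x, curl (fun y => curl u y) x - (α x + β x) • curl u x + (1 + α x * β x) • u x
        = cross (grad α x) (u x)) :
    (0 ≤ ∫ x in Set.Icc (fun _ : Fin 3 => -π) (fun _ => π),
        ((α x - β x) ^ 2 - 4) * (∑ i, (u x i) ^ 2)) ∧
    (∀ c : ℝ, (∀ x, α x - β x = c) → (∃ x, u x ≠ 0) → 4 ≤ c ^ 2) := by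
  classical
  have hud : ∀ k, ContDiff ℝ 2 (fun y => u y k) := fun k => contDiff_pi.mp hu k
  have hu1 : ∀ k, ContDiff ℝ 1 (fun y => u y k) := fun k => (hud k).of_le one_le_two
  have hwc : ∀ j, ContDiff ℝ 1 (fun x => W u α x j) := contDiff_W u α hu hα
  have huperc : ∀ (x : V3) (i j : Fin 3), u (x + Pi.single i (2 * π)) j = u x j :=
    fun x i j => congrFun (huper x i) j
  have hwper := W_periodic u α hu huper hαper
  have hcw := curl_W_eq u α β hu hα hdc
  have hcu : ∀ (x : V3) (j : Fin 3), curl u x j = W u α x j + α x * u x j := by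
    intro x j; simp only [W, Pi.sub_apply, Pi.smul_apply, smul_eq_mul]; ring
  -- the main integral identity
  have key : ∫ x in Set.Icc (fun _ : Fin 3 => -π) (fun _ => π),
      ((β x - α x) * (u x 0 * W u α x 0 + u x 1 * W u α x 1 + u x 2 * W u α x 2)
        - (u x 0 ^ 2 + u x 1 ^ 2 + u x 2 ^ 2)
        - (W u α x 0 ^ 2 + W u α x 1 ^ 2 + W u α x 2 ^ 2)) = 0 := by
    refine Eq.trans (setIntegral_congr_fun measurableSet_Icc fun x _ => ?_)
      (integral_u_curl_symm (W u α) u hwc hu1 hwper huperc)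
    simp only [Fin.sum_univ_three, hcw x, hcu x]
    ring
  -- continuity / integrability facts
  have hcontu : ∀ j, Continuous (fun x => u x j) := fun j => (hu1 j).continuous
  have hcontw : ∀ j, Continuous (fun x => W u α x j) := fun j => (hwc j).continuous
  have hQc : Continuous (fun x =>
      ((β x - α x) * u x 0 - 2 * W u α x 0) ^ 2 + ((β x - α x) * u x 1 - 2 * W u α x 1) ^ 2
        + ((β x - α x) * u x 2 - 2 * W u α x 2) ^ 2) := by
    have hc : Continuous β := hβ.continuous
    have hcα : Continuous α := hα.continuous
    fun_prop
  have hKc : Continuous (fun x =>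
      (β x - α x) * (u x 0 * W u α x 0 + u x 1 * W u α x 1 + u x 2 * W u α x 2)
        - (u x 0 ^ 2 + u x 1 ^ 2 + u x 2 ^ 2)
        - (W u α x 0 ^ 2 + W u α x 1 ^ 2 + W u α x 2 ^ 2)) := by
    have hc : Continuous β := hβ.continuous
    have hcα : Continuous α := hα.continuous
    fun_prop
  have hQI : IntegrableOn (fun x =>
      ((β x - α x) * u x 0 - 2 * W u α x 0) ^ 2 + ((β x - α x) * u x 1 - 2 * W u α x 1) ^ 2
        + ((β x - α x) * u x 2 - 2 * W u α x 2) ^ 2)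
      (Set.Icc (fun _ : Fin 3 => -π) (fun _ => π)) :=
    hQc.continuousOn.integrableOn_compact isCompact_Icc
  have hKI : IntegrableOn (fun x =>
      4 * ((β x - α x) * (u x 0 * W u α x 0 + u x 1 * W u α x 1 + u x 2 * W u α x 2)
        - (u x 0 ^ 2 + u x 1 ^ 2 + u x 2 ^ 2)
        - (W u α x 0 ^ 2 + W u α x 1 ^ 2 + W u α x 2 ^ 2)))
      (Set.Icc (fun _ : Fin 3 => -π) (fun _ => π)) :=
    (continuous_const.mul hKc).continuousOn.integrableOn_compact isCompact_Icc
  -- Part 1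
  have part1 : 0 ≤ ∫ x in Set.Icc (fun _ : Fin 3 => -π) (fun _ => π),
      ((α x - β x) ^ 2 - 4) * (∑ i, (u x i) ^ 2) := by
    have split : ∫ x in Set.Icc (fun _ : Fin 3 => -π) (fun _ => π),
        ((α x - β x) ^ 2 - 4) * (∑ i, (u x i) ^ 2)
        = (∫ x in Set.Icc (fun _ : Fin 3 => -π) (fun _ => π),
            (((β x - α x) * u x 0 - 2 * W u α x 0) ^ 2
              + ((β x - α x) * u x 1 - 2 * W u α x 1) ^ 2
              + ((β x - α x) * u x 2 - 2 * W u α x 2) ^ 2))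
          + ∫ x in Set.Icc (fun _ : Fin 3 => -π) (fun _ => π),
            (4 * ((β x - α x) * (u x 0 * W u α x 0 + u x 1 * W u α x 1 + u x 2 * W u α x 2)
              - (u x 0 ^ 2 + u x 1 ^ 2 + u x 2 ^ 2)
              - (W u α x 0 ^ 2 + W u α x 1 ^ 2 + W u α x 2 ^ 2))) := by
      rw [← MeasureTheory.integral_add hQI hKI]
      refine setIntegral_congr_fun measurableSet_Icc fun x _ => ?_
      simp only [Fin.sum_univ_three]
      ring
    rw [split, MeasureTheory.integral_const_mul 4 _, key, mul_zero, add_zero]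
    exact setIntegral_nonneg measurableSet_Icc fun x _ => by positivity
  refine ⟨part1, ?_⟩
  -- Part 2
  intro c hc hex
  obtain ⟨x₀, hx₀⟩ := hex
  -- periodicity by integer multiples
  have hper' : ∀ (x : V3) (i : Fin 3) (k : ℤ), u (x + Pi.single i (2 * π * k)) = u x := by
    intro x i k
    induction k using Int.induction_on with
    | zero => simp
    | succ n ih =>
      have : (Pi.single i (2 * π * ((n : ℤ) + 1 : ℤ)) : V3)
          = Pi.single i (2 * π * (n : ℤ)) + Pi.single i (2 * π) := by
        rw [← Pi.single_add]; congr 1; push_cast; ring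
      rw [this, ← add_assoc, huper, ih]
    | pred n ih =>
      have : (Pi.single i (2 * π * (-(n : ℤ) - 1 : ℤ)) + Pi.single i (2 * π) : V3)
          = Pi.single i (2 * π * (-(n : ℤ) : ℤ)) := by
        rw [← Pi.single_add]; congr 1; push_cast; ring
      have h2 := huper (x + Pi.single i (2 * π * (-(n : ℤ) - 1 : ℤ))) i
      rw [add_assoc, this] at h2
      rw [← h2, ih]
  -- reduce x₀ into the box
  set y : V3 := fun i => x₀ i - 2 * π * ⌊(x₀ i + π) / (2 * π)⌋ with hydef
  clear_value y
  have hxy : x₀ = ((y + Pi.single 0 (2 * π * ⌊(x₀ 0 + π) / (2 * π)⌋))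
      + Pi.single 1 (2 * π * ⌊(x₀ 1 + π) / (2 * π)⌋))
      + Pi.single 2 (2 * π * ⌊(x₀ 2 + π) / (2 * π)⌋) := by
    funext j
    fin_cases j <;>
      simp [hydef, Pi.single_apply, Fin.isValue, Fin.zero_eta, Fin.mk_one, Fin.reduceFinMk]
  have huy : u y ≠ 0 := by
    rw [hxy, hper', hper', hper'] at hx₀
    exact hx₀
  have hybounds : ∀ i, -π ≤ y i ∧ y i < π := by
    intro i
    have h2π : 0 < 2 * π := by positivity
    have h1 : (⌊(x₀ i + π) / (2 * π)⌋ : ℝ) ≤ (x₀ i + π) / (2 * π) := Int.floor_le _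
    have h2 : (x₀ i + π) / (2 * π) < ⌊(x₀ i + π) / (2 * π)⌋ + 1 := Int.lt_floor_add_one _
    constructor
    · have := (mul_le_mul_iff_left₀ h2π).2 h1
      rw [div_mul_cancel₀ _ (ne_of_gt h2π)] at this
      simp only [hydef]; nlinarith
    · have := (mul_lt_mul_iff_left₀ h2π).2 h2
      rw [div_mul_cancel₀ _ (ne_of_gt h2π)] at this
      simp only [hydef]; nlinarith
  -- positivity of ∫ |u|²
  set F : V3 → ℝ := fun x => ∑ i, (u x i) ^ 2 with hFdef
  have hFc : Continuous F := by
    apply continuous_finset_sum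
    intro i _
    exact (hcontu i).pow 2
  have hFy : 0 < F y := by
    have : ∃ j, u y j ≠ 0 := by
      by_contra h
      push_neg at h
      exact huy (funext fun j => h j)
    obtain ⟨j, hj⟩ := this
    exact Finset.sum_pos' (fun i _ => sq_nonneg _) ⟨j, Finset.mem_univ j, by positivity⟩
  have hSopen : IsOpen (F ⁻¹' Set.Ioi 0) := (isOpen_Ioi).preimage hFc
  obtain ⟨ε, hε, hball⟩ := Metric.isOpen_iff.mp hSopen y hFy
  set δ : ℝ := min (ε / 2) (min ((π - y 0) / 2) (min ((π - y 1) / 2) ((π - y 2) / 2))) with hδdef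
  clear_value δ
  have hδpos : 0 < δ := by
    rw [hδdef]
    have h0 := (hybounds 0).2
    have h1 := (hybounds 1).2
    have h2 := (hybounds 2).2
    exact lt_min (by positivity) (lt_min (by linarith) (lt_min (by linarith) (by linarith)))
  set z : V3 := fun i => y i + δ with hzdef
  have hzball : z ∈ Metric.ball y ε := by
    rw [mem_ball_iff_norm]
    have : z - y = fun _ : Fin 3 => δ := by funext i; simp [hzdef]
    rw [this]
    have : ‖(fun _ : Fin 3 => δ)‖ ≤ δ := by
      apply (pi_norm_le_iff_of_nonneg hδpos.le).2
      intro i; simp [abs_of_pos hδpos]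
    calc ‖(fun _ : Fin 3 => δ)‖ ≤ δ := this
      _ < ε := by
        have : δ ≤ ε / 2 := hδdef.le.trans (min_le_left _ _)
        linarith
  have hzO : z ∈ Set.pi Set.univ (fun _ : Fin 3 => Set.Ioo (-π) π) := by
    intro i _
    have h1 := (hybounds i).1
    have h2 := (hybounds i).2
    constructor
    · simp only [hzdef]; linarith
    · have : δ ≤ (π - y i) / 2 := by
        rw [hδdef]
        fin_cases i
        · exact le_trans (min_le_right _ _) (min_le_left _ _)
        · exact le_trans (min_le_right _ _) (le_trans (min_le_right _ _) (min_le_left _ _))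
        · exact le_trans (min_le_right _ _) (le_trans (min_le_right _ _) (min_le_right _ _))
      simp only [hzdef]; linarith
  have hOopen : IsOpen (Set.pi Set.univ (fun _ : Fin 3 => Set.Ioo (-π) π)) :=
    isOpen_set_pi Set.finite_univ (fun _ _ => isOpen_Ioo)
  have hUpos : 0 < volume ((F ⁻¹' Set.Ioi 0) ∩ Set.pi Set.univ (fun _ : Fin 3 => Set.Ioo (-π) π)) :=
    (hSopen.inter hOopen).measure_pos volume ⟨z, hball hzball, hzO⟩
  have hsub : (F ⁻¹' Set.Ioi 0) ∩ Set.pi Set.univ (fun _ : Fin 3 => Set.Ioo (-π) π)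
      ⊆ Function.support F ∩ Set.Icc (fun _ : Fin 3 => -π) (fun _ => π) := by
    rintro x ⟨hx1, hx2⟩
    refine ⟨ne_of_gt hx1, ?_, ?_⟩
    · intro i; exact (hx2 i (Set.mem_univ i)).1.le
    · intro i; exact (hx2 i (Set.mem_univ i)).2.le
  have hFpos : 0 < ∫ x in Set.Icc (fun _ : Fin 3 => -π) (fun _ => π), F x := by
    rw [setIntegral_pos_iff_support_of_nonneg_ae
      (Filter.Eventually.of_forall fun x => by positivity)
      (hFc.continuousOn.integrableOn_compact isCompact_Icc)]
    exact lt_of_lt_of_le hUpos (measure_mono hsub)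
  have heq : ∫ x in Set.Icc (fun _ : Fin 3 => -π) (fun _ => π),
      ((α x - β x) ^ 2 - 4) * (∑ i, (u x i) ^ 2)
      = (c ^ 2 - 4) * ∫ x in Set.Icc (fun _ : Fin 3 => -π) (fun _ => π), F x := by
    rw [← MeasureTheory.integral_const_mul (c ^ 2 - 4)]
    exact setIntegral_congr_fun measurableSet_Icc fun x _ => by rw [hc x]
  rw [heq] at part1
  nlinarith [hFpos, part1]
end
end

section
/- Let λ₁, λ₂ : ℝ³ → ℝ be continuously differentiable with λ₁ − λ₂ constant, and let u₁, u₂ : ℝ³ → ℝ³ be twice continuously differentiable with div u_i = 0 and curl u_i = λ_i u_i for i = 1, 2. Set α = (λ₁ + λ₂ + √((λ₁ − λ₂)² + 4))/2 and β = (λ₁ + λ₂ − √((λ₁ − λ₂)² + 4))/2, and define u = u₁ + u₂ and B = α u − curl u (equivalently B = (α − λ₁) u₁ + (α − λ₂) u₂). Then div u = 0, div B = 0, B + curl u = α u, and u − curl B = −β B pointwise on ℝ³; that is, (u, B) is a double Beltrami state with factors α, β. -/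
noncomputable section

open Real MeasureTheory

lemma pd_comb (i : Fin 3) (a b : ℝ) (f g : V3 → ℝ) (x : V3)
    (hf : DifferentiableAt ℝ f x) (hg : DifferentiableAt ℝ g x) :
    pd i (fun y => a * f y + b * g y) x = a * pd i f x + b * pd i g x := by
  unfold pd
  rw [fderiv_fun_add ((hf.const_mul a)) ((hg.const_mul b)),
    fderiv_const_mul hf a, fderiv_const_mul hg b]
  simp

lemma curl_comb (a b : ℝ) (v w : V3 → V3)
    (hv : ∀ j, Differentiable ℝ (fun y => v y j))
    (hw : ∀ j, Differentiable ℝ (fun y => w y j)) (x : V3) :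
    curl (fun y => a • v y + b • w y) x = a • curl v x + b • curl w x := by
  have h : ∀ (i j : Fin 3), pd i (fun y => a * v y j + b * w y j) x
      = a * pd i (fun y => v y j) x + b * pd i (fun y => w y j) x :=
    fun i j => pd_comb i a b _ _ x (hv j x) (hw j x)
  funext j
  fin_cases j <;> simp [curl, h] <;> ring

lemma div3_comb (a b : ℝ) (v w : V3 → V3)
    (hv : ∀ j, Differentiable ℝ (fun y => v y j))
    (hw : ∀ j, Differentiable ℝ (fun y => w y j)) (x : V3) :
    div3 (fun y => a • v y + b • w y) x = a * div3 v x + b * div3 w x := by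
  have h : ∀ (i j : Fin 3), pd i (fun y => a * v y j + b * w y j) x
      = a * pd i (fun y => v y j) x + b * pd i (fun y => w y j) x :=
    fun i j => pd_comb i a b _ _ x (hv j x) (hw j x)
  simp only [div3, Pi.smul_apply, Pi.add_apply, smul_eq_mul, h]
  ring

/-- Theorem 2.2 (1): a superposition of two Beltrami flows with
`λ₁ − λ₂` constant yields a double Beltrami state with factors
`α, β = (λ₁ + λ₂ ± √((λ₁ − λ₂)² + 4))/2`. -/
theorem superposition_is_double_beltrami
    (l1 l2 : V3 → ℝ) (u1 u2 : V3 → V3)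
    (hl1 : ContDiff ℝ 1 l1) (hl2 : ContDiff ℝ 1 l2)
    (hconst : ∃ c : ℝ, ∀ x, l1 x - l2 x = c)
    (hu1 : ContDiff ℝ 2 u1) (hu2 : ContDiff ℝ 2 u2)
    (hdiv1 : ∀ x, div3 u1 x = 0) (hdiv2 : ∀ x, div3 u2 x = 0)
    (hc1 : ∀ x, curl u1 x = l1 x • u1 x) (hc2 : ∀ x, curl u2 x = l2 x • u2 x)
    (α β : V3 → ℝ)
    (hα : ∀ x, α x = (l1 x + l2 x + Real.sqrt ((l1 x - l2 x) ^ 2 + 4)) / 2)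
    (hβ : ∀ x, β x = (l1 x + l2 x - Real.sqrt ((l1 x - l2 x) ^ 2 + 4)) / 2)
    (u B : V3 → V3)
    (hudef : ∀ x, u x = u1 x + u2 x)
    (hBdef : ∀ x, B x = α x • u x - curl u x) :
    (∀ x, div3 u x = 0) ∧ (∀ x, div3 B x = 0) ∧
    (∀ x, B x = (α x - l1 x) • u1 x + (α x - l2 x) • u2 x) ∧
    (∀ x, B x + curl u x = α x • u x) ∧
    (∀ x, u x - curl B x = -(β x) • B x) := by
  obtain ⟨c, hc⟩ := hconst
  set s := Real.sqrt (c ^ 2 + 4) with hs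
  have hs2 : s ^ 2 = c ^ 2 + 4 := Real.sq_sqrt (by positivity)
  have hd1 : ∀ j, Differentiable ℝ (fun y => u1 y j) := fun j =>
    (contDiff_pi.mp hu1 j).differentiable (by norm_num)
  have hd2 : ∀ j, Differentiable ℝ (fun y => u2 y j) := fun j =>
    (contDiff_pi.mp hu2 j).differentiable (by norm_num)
  have hsqrt : ∀ x, Real.sqrt ((l1 x - l2 x) ^ 2 + 4) = s := fun x => by rw [hc x]
  set a := (-c + s) / 2 with hadef
  set b := (c + s) / 2 with hbdef
  have ha : ∀ x, α x - l1 x = a := fun x => by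
    rw [hα x, hsqrt x, hadef]; have := hc x; linarith
  have hb : ∀ x, α x - l2 x = b := fun x => by
    rw [hα x, hsqrt x, hbdef]; have := hc x; linarith
  have hufun : u = fun y => (1 : ℝ) • u1 y + (1 : ℝ) • u2 y :=
    funext fun y => by rw [hudef y]; simp
  have hcu : ∀ x, curl u x = l1 x • u1 x + l2 x • u2 x := fun x => by
    rw [hufun, curl_comb 1 1 u1 u2 hd1 hd2 x, one_smul, one_smul, hc1 x, hc2 x]
  have hBcomb : ∀ x, B x = a • u1 x + b • u2 x := fun x => by
    rw [hBdef x, hcu x, hudef x, ← ha x, ← hb x]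
    funext j
    simp only [Pi.add_apply, Pi.sub_apply, Pi.smul_apply, smul_eq_mul]
    ring
  have hBfun : B = fun y => a • u1 y + b • u2 y := funext hBcomb
  refine ⟨fun x => ?_, fun x => ?_, fun x => ?_, fun x => ?_, fun x => ?_⟩
  · rw [hufun, div3_comb 1 1 u1 u2 hd1 hd2 x, hdiv1 x, hdiv2 x]; ring
  · rw [hBfun, div3_comb a b u1 u2 hd1 hd2 x, hdiv1 x, hdiv2 x]; ring
  · rw [hBcomb x, ha x, hb x]
  · rw [hBdef x]; abel
  · have hcB : curl B x = a • (l1 x • u1 x) + b • (l2 x • u2 x) := by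
      rw [hBfun, curl_comb a b u1 u2 hd1 hd2 x, hc1 x, hc2 x]
    have h1 : a * (l1 x - β x) = 1 := by
      rw [hβ x, hsqrt x, hadef]
      linear_combination ((s - c) / 4) * hc x + (1 / 4) * hs2
    have h2 : b * (l2 x - β x) = 1 := by
      rw [hβ x, hsqrt x, hbdef]
      linear_combination (-(c + s) / 4) * hc x + (1 / 4) * hs2
    rw [hcB, hudef x, hBcomb x]
    funext j
    simp only [Pi.add_apply, Pi.sub_apply, Pi.smul_apply, Pi.neg_apply, smul_eq_mul, neg_mul]
    linear_combination (-(u1 x j)) * h1 + (-(u2 x j)) * h2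
end
end

section
/- Let α, β : ℝ³ → ℝ be continuously differentiable with α − β equal to a constant c satisfying c² ≥ 4, and set λ₁ = (α + β + √(c² − 4))/2 and λ₂ = (α + β − √(c² − 4))/2. Let u, B : ℝ³ → ℝ³ be twice continuously differentiable with div u = 0, div B = 0, B + curl u = α u, and u − curl B = −β B pointwise on ℝ³. Then v₁ := curl u − λ₂ u satisfies curl v₁ = λ₁ v₁ and div v₁ = 0, and v₂ := curl u − λ₁ u satisfies curl v₂ = λ₂ v₂ and div v₂ = 0. -/
noncomputable section

open Real MeasureTheory

lemma pd_smul_sub (a : ℝ) (f g : V3 → ℝ) (hf : Differentiable ℝ f)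
    (hg : Differentiable ℝ g) (i : Fin 3) (x : V3) :
    pd i (fun y => a * f y - g y) x = a * pd i f x - pd i g x := by
  unfold pd
  rw [fderiv_fun_sub ((hf x).const_mul a) (hg x), fderiv_const_mul (hf x)]
  simp

lemma curl_smul_sub (a : ℝ) (u B : V3 → V3)
    (hu : ∀ j, Differentiable ℝ fun y => u y j)
    (hB : ∀ j, Differentiable ℝ fun y => B y j) (x : V3) :
    curl (fun y => a • u y - B y) x = a • curl u x - curl B x := by
  simp only [curl, Pi.smul_apply, Pi.sub_apply, smul_eq_mul]
  rw [pd_smul_sub a _ _ (hu _) (hB _), pd_smul_sub a _ _ (hu _) (hB _),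
    pd_smul_sub a _ _ (hu _) (hB _), pd_smul_sub a _ _ (hu _) (hB _),
    pd_smul_sub a _ _ (hu _) (hB _), pd_smul_sub a _ _ (hu _) (hB _)]
  funext j
  fin_cases j <;> · simp; ring

lemma div3_smul_sub (a : ℝ) (u B : V3 → V3)
    (hu : ∀ j, Differentiable ℝ fun y => u y j)
    (hB : ∀ j, Differentiable ℝ fun y => B y j) (x : V3) :
    div3 (fun y => a • u y - B y) x = a * div3 u x - div3 B x := by
  simp only [div3, Pi.smul_apply, Pi.sub_apply, smul_eq_mul]
  rw [pd_smul_sub a _ _ (hu _) (hB _), pd_smul_sub a _ _ (hu _) (hB _),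
    pd_smul_sub a _ _ (hu _) (hB _)]
  ring

/-- for a double Beltrami state with `α − β = c` constant, `c² ≥ 4`,
the fields `curl u − λ₂ u` and `curl u − λ₁ u` are Beltrami flows with factors `λ₁, λ₂`. -/
theorem double_beltrami_factorization
    (α β : V3 → ℝ) (c : ℝ)
    (hα : ContDiff ℝ 1 α) (hβ : ContDiff ℝ 1 β)
    (hc : ∀ x, α x - β x = c) (hc2 : 4 ≤ c ^ 2)
    (l1 l2 : V3 → ℝ)
    (hl1 : ∀ x, l1 x = (α x + β x + Real.sqrt (c ^ 2 - 4)) / 2)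
    (hl2 : ∀ x, l2 x = (α x + β x - Real.sqrt (c ^ 2 - 4)) / 2)
    (u B : V3 → V3)
    (hu : ContDiff ℝ 2 u) (hB : ContDiff ℝ 2 B)
    (hdivu : ∀ x, div3 u x = 0) (hdivB : ∀ x, div3 B x = 0)
    (h1 : ∀ x, B x + curl u x = α x • u x)
    (h2 : ∀ x, u x - curl B x = -(β x) • B x) :
    (∀ x, curl (fun y => curl u y - l2 y • u y) x = l1 x • (curl u x - l2 x • u x)) ∧
    (∀ x, div3 (fun y => curl u y - l2 y • u y) x = 0) ∧
    (∀ x, curl (fun y => curl u y - l1 y • u y) x = l2 x • (curl u x - l1 x • u x)) ∧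
    (∀ x, div3 (fun y => curl u y - l1 y • u y) x = 0) := by
  
  set s : ℝ := Real.sqrt (c ^ 2 - 4) with hsdef
  have hs : s * s = c ^ 2 - 4 := Real.mul_self_sqrt (by linarith)
  have hu' : ∀ j, Differentiable ℝ fun y => u y j :=
    differentiable_pi.mp (hu.differentiable two_ne_zero)
  have hB' : ∀ j, Differentiable ℝ fun y => B y j :=
    differentiable_pi.mp (hB.differentiable two_ne_zero)
  have hveq1 : (fun y => curl u y - l2 y • u y)
      = fun y => ((c + s) / 2) • u y - B y := by
    funext y j
    have h1' := congrFun (h1 y) j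
    have hcy := hc y
    simp only [Pi.sub_apply, Pi.smul_apply, Pi.add_apply, smul_eq_mul] at h1' ⊢
    rw [hl2 y]
    linear_combination h1' + (u y j / 2) * hcy
  have hveq2 : (fun y => curl u y - l1 y • u y)
      = fun y => ((c - s) / 2) • u y - B y := by
    funext y j
    have h1' := congrFun (h1 y) j
    have hcy := hc y
    simp only [Pi.sub_apply, Pi.smul_apply, Pi.add_apply, smul_eq_mul] at h1' ⊢
    rw [hl1 y]
    linear_combination h1' + (u y j / 2) * hcy
  refine ⟨fun x => ?_, fun x => ?_, fun x => ?_, fun x => ?_⟩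
  · rw [hveq1, curl_smul_sub _ _ _ hu' hB']
    funext j
    have h1' := congrFun (h1 x) j
    have h2' := congrFun (h2 x) j
    have hcx := hc x
    simp only [Pi.sub_apply, Pi.smul_apply, Pi.add_apply, Pi.neg_apply,
      smul_eq_mul, neg_mul] at h1' h2' ⊢
    rw [hl1 x, hl2 x]
    linear_combination ((c - α x - β x) / 2) * h1' + h2'
      - (u x j / 4) * hs + (u x j * (c - α x - β x) / 4 + B x j / 2) * hcx
  · rw [hveq1, div3_smul_sub _ _ _ hu' hB', hdivu x, hdivB x]; ring
  · rw [hveq2, curl_smul_sub _ _ _ hu' hB']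
    funext j
    have h1' := congrFun (h1 x) j
    have h2' := congrFun (h2 x) j
    have hcx := hc x
    simp only [Pi.sub_apply, Pi.smul_apply, Pi.add_apply, Pi.neg_apply,
      smul_eq_mul, neg_mul] at h1' h2' ⊢
    rw [hl1 x, hl2 x]
    linear_combination ((c - α x - β x) / 2) * h1' + h2'
      - (u x j / 4) * hs + (u x j * (c - α x - β x) / 4 + B x j / 2) * hcx
  · rw [hveq2, div3_smul_sub _ _ _ hu' hB', hdivu x, hdivB x]; ring
end
end

section
/- Let u, B : ℝ × ℝ³ → ℝ³ be twice continuously differentiable and p̄ : ℝ × ℝ³ → ℝ twice continuously differentiable, solving the ideal Hall MHD equations pointwise: ∂ₜu + (curl u) × u + ∇p̄ = (curl B) × B and ∂ₜB + curl(B × u) + curl((curl B) × B) = 0, where all spatial operators act in x. Then the magneto-vorticity field B + curl u satisfies ∂ₜ(B + curl u) + curl((B + curl u) × u) = 0 pointwise. -/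
noncomputable section

open Real MeasureTheory

section Helpers

variable {E : Type*} [NormedAddCommGroup E] [NormedSpace ℝ E]

lemma fderiv_fderiv_apply {f : E → ℝ} (hf : ContDiff ℝ 2 f) (x v w : E) :
    fderiv ℝ (fun y => fderiv ℝ f y v) x w = fderiv ℝ (fderiv ℝ f) x w v := by
  have hd2 : DifferentiableAt ℝ (fderiv ℝ f) x :=
    ((hf.fderiv_right (m := 1) (by norm_num)).differentiable (by norm_num)) x
  rw [fderiv_clm_apply hd2 (differentiableAt_const v)]
  simp

lemma sym_second {f : E → ℝ} (hf : ContDiff ℝ 2 f) (x v w : E) :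
    fderiv ℝ (fun y => fderiv ℝ f y v) x w = fderiv ℝ (fun y => fderiv ℝ f y w) x v := by
  rw [fderiv_fderiv_apply hf, fderiv_fderiv_apply hf]
  exact (hf.contDiffAt.isSymmSndFDerivAt (by norm_num)) w v

lemma contDiff_fderiv_apply {G : E → ℝ} (hG : ContDiff ℝ 2 G) (v : E) :
    ContDiff ℝ 1 (fun q => fderiv ℝ G q v) :=
  (ContinuousLinearMap.apply ℝ ℝ v).contDiff.comp (hG.fderiv_right (by norm_num))

end Helpers

lemma hasFDerivAt_slice_space (t : ℝ) (x : V3) {G : ℝ × V3 → ℝ}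
    (hG : DifferentiableAt ℝ G (t, x)) :
    HasFDerivAt (fun y => G (t, y))
      ((fderiv ℝ G (t, x)).comp (ContinuousLinearMap.inr ℝ ℝ V3)) x := by
  have h1 : HasFDerivAt (fun y : V3 => ((t : ℝ), y)) (ContinuousLinearMap.inr ℝ ℝ V3) x :=
    (hasFDerivAt_const t x).prodMk (hasFDerivAt_id x)
  exact hG.hasFDerivAt.comp x h1

lemma pd_slice (t : ℝ) (x : V3) {G : ℝ × V3 → ℝ} (hG : DifferentiableAt ℝ G (t, x)) (i : Fin 3) :
    pd i (fun y => G (t, y)) x = fderiv ℝ G (t, x) (0, Pi.single i 1) := by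
  rw [pd, (hasFDerivAt_slice_space t x hG).fderiv]
  rfl

lemma deriv_slice (t : ℝ) (x : V3) {G : ℝ × V3 → ℝ} (hG : DifferentiableAt ℝ G (t, x)) :
    deriv (fun s => G (s, x)) t = fderiv ℝ G (t, x) (1, 0) := by
  have h1 : HasDerivAt (fun s : ℝ => (s, x)) ((1 : ℝ), (0 : V3)) t := by
    simpa using (hasDerivAt_id t).prodMk (hasDerivAt_const t x)
  exact (hG.hasFDerivAt.comp_hasDerivAt t h1).deriv

lemma contDiff_slice {G : ℝ × V3 → ℝ} (hG : ContDiff ℝ 2 G) (t : ℝ) :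
    ContDiff ℝ 2 (fun y => G (t, y)) :=
  hG.comp (contDiff_const.prodMk contDiff_id)

lemma contDiff_pd {f : V3 → ℝ} (hf : ContDiff ℝ 2 f) (i : Fin 3) :
    ContDiff ℝ 1 (fun y => pd i f y) :=
  contDiff_fderiv_apply hf (Pi.single i 1)

lemma pd_add {f g : V3 → ℝ} {x : V3} (hf : DifferentiableAt ℝ f x)
    (hg : DifferentiableAt ℝ g x) (i : Fin 3) :
    pd i (fun y => f y + g y) x = pd i f x + pd i g x := by
  simp [pd, fderiv_fun_add hf hg]

/-- commuting the time derivative with a spatial partial derivative -/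
lemma deriv_pd_comm {G : ℝ × V3 → ℝ} (hG : ContDiff ℝ 2 G) (t : ℝ) (x : V3) (i : Fin 3) :
    deriv (fun s => pd i (fun y => G (s, y)) x) t
      = pd i (fun y => deriv (fun s => G (s, y)) t) x := by
  have hGd : Differentiable ℝ G := hG.differentiable (by norm_num)
  have h1 : (fun s => pd i (fun y => G (s, y)) x)
      = fun s => fderiv ℝ G (s, x) (0, Pi.single i 1) :=
    funext fun s => pd_slice s x (hGd _) i
  have h2 : (fun y => deriv (fun s => G (s, y)) t)
      = fun y => fderiv ℝ G (t, y) ((1 : ℝ), (0 : V3)) :=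
    funext fun y => deriv_slice t y (hGd _)
  rw [h1, h2]
  have hH1 := contDiff_fderiv_apply hG ((0 : ℝ), Pi.single i (1:ℝ))
  have hH2 := contDiff_fderiv_apply hG ((1 : ℝ), (0 : V3))
  rw [deriv_slice t x ((hH1.differentiable (by norm_num)) _),
      pd_slice t x ((hH2.differentiable (by norm_num)) _) i]
  exact sym_second hG (t, x) _ _

lemma deriv_pd_comm' {u : ℝ → V3 → V3} {b : Fin 3}
    (h : ContDiff ℝ 2 (fun q : ℝ × V3 => u q.1 q.2 b)) (t : ℝ) (x : V3) (a : Fin 3) :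
    deriv (fun s => pd a (fun y => u s y b) x) t
      = pd a (fun y => deriv (fun s => u s y b) t) x :=
  deriv_pd_comm h t x a

lemma cross_add_left (a b c : V3) : cross (a + b) c = cross a c + cross b c := by
  funext k
  fin_cases k <;> simp [cross] <;> ring

lemma curl_add {v w : V3 → V3} {x : V3}
    (hv : ∀ k, DifferentiableAt ℝ (fun y => v y k) x)
    (hw : ∀ k, DifferentiableAt ℝ (fun y => w y k) x) :
    curl (fun y => v y + w y) x = curl v x + curl w x := by
  have h : ∀ a b : Fin 3, pd a (fun y => v y b + w y b) x
      = pd a (fun y => v y b) x + pd a (fun y => w y b) x :=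
    fun a b => pd_add (hv b) (hw b) a
  funext j
  fin_cases j <;> simp [curl, h] <;> ring

lemma curl_grad {f : V3 → ℝ} (hf : ContDiff ℝ 2 f) (x : V3) :
    curl (fun y => grad f y) x = 0 := by
  have hsym : ∀ i j : Fin 3, pd i (fun y => pd j f y) x = pd j (fun y => pd i f y) x := by
    intro i j
    have := sym_second hf x (Pi.single j 1) (Pi.single i 1)
    simpa [pd] using this
  funext k
  fin_cases k <;> simp [curl, grad] <;>
    [rw [hsym 1 2]; rw [hsym 2 0]; rw [hsym 0 1]] <;> ring

/-- for smooth solutions of ideal Hall MHD, the magneto-vorticity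
`B + curl u` satisfies `∂ₜ(B + curl u) + curl((B + curl u) × u) = 0`. -/
theorem magneto_vorticity_equation
    (u B : ℝ → V3 → V3) (pbar : ℝ → V3 → ℝ)
    (hu : ContDiff ℝ 2 (fun q : ℝ × V3 => u q.1 q.2))
    (hB : ContDiff ℝ 2 (fun q : ℝ × V3 => B q.1 q.2))
    (hp : ContDiff ℝ 2 (fun q : ℝ × V3 => pbar q.1 q.2))
    (hmom : ∀ t x,
      dt u t x + cross (curl (u t) x) (u t x) + grad (pbar t) x
        = cross (curl (B t) x) (B t x))
    (hind : ∀ t x,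
      dt B t x + curl (fun y => cross (B t y) (u t y)) x
        + curl (fun y => cross (curl (B t) y) (B t y)) x = 0) :
    ∀ t x,
      dt (fun s y => B s y + curl (u s) y) t x
        + curl (fun y => cross (B t y + curl (u t) y) (u t y)) x = 0 := by
  intro t x
  -- component regularity
  have hu2 : ∀ k : Fin 3, ContDiff ℝ 2 (fun q : ℝ × V3 => u q.1 q.2 k) := fun k =>
    (ContinuousLinearMap.proj k : V3 →L[ℝ] ℝ).contDiff.comp hu
  have hB2 : ∀ k : Fin 3, ContDiff ℝ 2 (fun q : ℝ × V3 => B q.1 q.2 k) := fun k =>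
    (ContinuousLinearMap.proj k : V3 →L[ℝ] ℝ).contDiff.comp hB
  have hut : ∀ k : Fin 3, ContDiff ℝ 2 (fun y => u t y k) := fun k => contDiff_slice (hu2 k) t
  have hBt : ∀ k : Fin 3, ContDiff ℝ 2 (fun y => B t y k) := fun k => contDiff_slice (hB2 k) t
  have hpt : ContDiff ℝ 2 (fun y => pbar t y) := contDiff_slice hp t
  -- spatial differentiability helpers
  have hpdU : ∀ a b : Fin 3, Differentiable ℝ (fun y => pd a (fun z => u t z b) y) :=
    fun a b => (contDiff_pd (hut b) a).differentiable (by norm_num)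
  have hU : ∀ b : Fin 3, Differentiable ℝ (fun y => u t y b) :=
    fun b => (hut b).differentiable (by norm_num)
  have hBd : ∀ b : Fin 3, Differentiable ℝ (fun y => B t y b) :=
    fun b => (hBt b).differentiable (by norm_num)
  -- dt u components are differentiable in space
  have hdtu_eq : ∀ j : Fin 3, (fun y => dt u t y j)
      = fun y => fderiv ℝ (fun q : ℝ × V3 => u q.1 q.2 j) (t, y) ((1 : ℝ), (0 : V3)) := by
    intro j
    funext y
    exact deriv_slice t y (((hu2 j).differentiable (by norm_num)) _)
  have hdtu : ∀ j : Fin 3, Differentiable ℝ (fun y => dt u t y j) := by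
    intro j
    rw [hdtu_eq j]
    exact ((contDiff_fderiv_apply (hu2 j) _).comp
      (contDiff_const.prodMk contDiff_id)).differentiable (by norm_num)
  -- differentiability of components of the cross-product fields
  have hcBu : ∀ k, DifferentiableAt ℝ (fun y => cross (B t y) (u t y) k) x := by
    intro k
    fin_cases k <;> simp only [cross, Matrix.cons_val_zero, Matrix.cons_val_one,
      Matrix.head_cons, Matrix.cons_val_two, Matrix.tail_cons] <;>
      exact (((hBd _).mul (hU _)).sub ((hBd _).mul (hU _))) x
  have hcUu : ∀ k, DifferentiableAt ℝ (fun y => cross (curl (u t) y) (u t y) k) x := by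
    intro k
    fin_cases k <;> simp only [cross, curl, Matrix.cons_val_zero, Matrix.cons_val_one,
      Matrix.head_cons, Matrix.cons_val_two, Matrix.tail_cons] <;>
      exact (((((hpdU _ _).sub (hpdU _ _)).mul (hU _)).sub
        (((hpdU _ _).sub (hpdU _ _)).mul (hU _)))) x
  have hgp : ∀ k, DifferentiableAt ℝ (fun y => grad (fun z => pbar t z) y k) x := by
    intro k
    fin_cases k <;> simp only [grad, Matrix.cons_val_zero, Matrix.cons_val_one,
      Matrix.head_cons, Matrix.cons_val_two, Matrix.tail_cons] <;>
      exact ((contDiff_pd hpt _).differentiable (by norm_num)) x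
  -- time differentiability helpers
  have hdiffT : ∀ a b : Fin 3, DifferentiableAt ℝ (fun s => pd a (fun y => u s y b) x) t := by
    intro a b
    have heq : (fun s => pd a (fun y => u s y b) x)
        = fun s => fderiv ℝ (fun q : ℝ × V3 => u q.1 q.2 b) (s, x) (0, Pi.single a 1) :=
      funext fun s => pd_slice s x (((hu2 b).differentiable (by norm_num)) _) a
    rw [heq]
    exact (((contDiff_fderiv_apply (hu2 b) _).comp
      (contDiff_id.prodMk contDiff_const)).differentiable (by norm_num)) t
  have hBdT : ∀ j : Fin 3, DifferentiableAt ℝ (fun s => B s x j) t := by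
    intro j
    exact (((hB2 j).comp (contDiff_id.prodMk contDiff_const)).differentiable (by norm_num)) t
  have hcurlT : ∀ j : Fin 3, DifferentiableAt ℝ (fun s => curl (u s) x j) t := by
    intro j
    fin_cases j <;> simp only [curl, Matrix.cons_val_zero, Matrix.cons_val_one,
      Matrix.head_cons, Matrix.cons_val_two, Matrix.tail_cons] <;>
      exact (hdiffT _ _).sub (hdiffT _ _)
  -- Step 1: split the time derivative
  have step1 : dt (fun s y => B s y + curl (u s) y) t x
      = dt B t x + dt (fun s y => curl (u s) y) t x := by
    funext j
    simp only [dt, Pi.add_apply]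
    exact deriv_fun_add (hBdT j) (hcurlT j)
  -- Step 3: dt commutes with curl
  have step3 : dt (fun s y => curl (u s) y) t x = curl (fun y => dt u t y) x := by
    have hcomm : ∀ a b : Fin 3, deriv (fun s => pd a (fun y => u s y b) x) t
        = pd a (fun y => deriv (fun s => u s y b) t) x :=
      fun a b => deriv_pd_comm' (hu2 b) t x a
    have comp : ∀ a b c d : Fin 3,
        deriv (fun s => pd a (fun y => u s y b) x - pd c (fun y => u s y d) x) t
          = pd a (fun y => deriv (fun s => u s y b) t) x
            - pd c (fun y => deriv (fun s => u s y d) t) x := by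
      intro a b c d
      rw [deriv_fun_sub (hdiffT a b) (hdiffT c d), hcomm a b, hcomm c d]
    funext j
    fin_cases j
    · exact comp 1 2 2 1
    · exact comp 2 0 0 2
    · exact comp 0 1 1 0
  -- Step 2: split the curl of the sum field
  have step2 : curl (fun y => cross (B t y + curl (u t) y) (u t y)) x
      = curl (fun y => cross (B t y) (u t y)) x
        + curl (fun y => cross (curl (u t) y) (u t y)) x := by
    have hfe : (fun y => cross (B t y + curl (u t) y) (u t y))
        = fun y => cross (B t y) (u t y) + cross (curl (u t) y) (u t y) :=
      funext fun y => cross_add_left _ _ _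
    rw [hfe]
    exact curl_add hcBu hcUu
  -- Step 4: curl of the momentum equation
  have hsum : ∀ k, DifferentiableAt ℝ
      (fun y => (dt u t y + cross (curl (u t) y) (u t y)) k) x :=
    fun k => ((hdtu k) x).add (hcUu k)
  have step4 : curl (fun y => dt u t y) x
        + curl (fun y => cross (curl (u t) y) (u t y)) x
      = curl (fun y => cross (curl (B t) y) (B t y)) x := by
    have hfe : (fun y => cross (curl (B t) y) (B t y))
        = fun y => (dt u t y + cross (curl (u t) y) (u t y)) + grad (pbar t) y :=
      funext fun y => (hmom t y).symm
    calc curl (fun y => dt u t y) x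
          + curl (fun y => cross (curl (u t) y) (u t y)) x
        = curl (fun y => dt u t y + cross (curl (u t) y) (u t y)) x := by
          rw [curl_add (fun k => (hdtu k) x) hcUu]
      _ = curl (fun y => dt u t y + cross (curl (u t) y) (u t y)) x
            + curl (fun y => grad (pbar t) y) x := by
          rw [curl_grad hpt x, add_zero]
      _ = curl (fun y => (dt u t y + cross (curl (u t) y) (u t y)) + grad (pbar t) y) x := by
          rw [curl_add hsum hgp]
      _ = curl (fun y => cross (curl (B t) y) (B t y)) x := by rw [← hfe]
  -- assemble
  rw [step1, step3, step2]
  have h3 := hind t x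
  have hre : dt B t x + curl (fun y => dt u t y) x
        + (curl (fun y => cross (B t y) (u t y)) x
          + curl (fun y => cross (curl (u t) y) (u t y)) x)
      = dt B t x + curl (fun y => cross (B t y) (u t y)) x
        + (curl (fun y => dt u t y) x
          + curl (fun y => cross (curl (u t) y) (u t y)) x) := by abel
  rw [hre, step4]
  exact h3
end
end
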